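/- arXiv:0905.4841 — 5 statements merged into one kernel-verified Lean document; each statement's English description precedes it below -/
import Mathlib

section
/- For two I×J integer matrices with nonnegative entries having the same row sums and the same column sums, the second can be obtained from the first by a finite sequence of basic moves (each basic move adds ±1 to the four cells of a 2×2 minor in the pattern +1,−1,−1,+1), such that every intermediate matrix has nonnegative entries. -/
/-- The basic move at rows `i1 ≠ i2` and columns `j1 ≠ j2`:
`+1` at `(i1,j1)` and `(i2,j2)`, `-1` at `(i1,j2)` and `(i2,j1)`, `0` elsewhere. -/
def basicMove {I J : ℕ} (i1 i2 : Fin I) (j1 j2 : Fin J) : Fin I × Fin J → ℤ :=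
  fun p => (if p = (i1, j1) then 1 else 0) + (if p = (i2, j2) then 1 else 0)
    - (if p = (i1, j2) then 1 else 0) - (if p = (i2, j1) then 1 else 0)

/-- The table obtained by decreasing at `(i1,j1)`, `(i2,j2)` and increasing at
`(i1,j2)`, `(i2,j1)`. -/
def adjust {I J : ℕ} (n : Fin I × Fin J → ℕ) (i1 i2 : Fin I) (j1 j2 : Fin J) :
    Fin I × Fin J → ℕ := fun p =>
  if p = (i1, j1) then n p - 1 else if p = (i2, j2) then n p - 1
  else if p = (i1, j2) then n p + 1 else if p = (i2, j1) then n p + 1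
  else n p

lemma adjust_cast {I J : ℕ} (n : Fin I × Fin J → ℕ) (i1 i2 : Fin I) (j1 j2 : Fin J)
    (hii : i1 ≠ i2) (hjj : j1 ≠ j2) (h1 : 1 ≤ n (i1, j1)) (h2 : 1 ≤ n (i2, j2))
    (p : Fin I × Fin J) :
    ((adjust n i1 i2 j1 j2 p : ℤ)) = n p + basicMove i1 i2 j2 j1 p := by
  obtain ⟨i, j⟩ := p
  simp only [adjust, basicMove, Prod.mk.injEq]
  by_cases hi1 : i = i1 <;> by_cases hi2 : i = i2 <;>
    by_cases hj1 : j = j1 <;> by_cases hj2 : j = j2 <;>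
    simp_all <;> omega

lemma row_sum_basicMove {I J : ℕ} (i1 i2 : Fin I) (j1 j2 : Fin J) (i : Fin I) :
    ∑ j, basicMove i1 i2 j1 j2 (i, j) = 0 := by
  simp [basicMove, Prod.mk.injEq, ite_and, Finset.sum_sub_distrib,
    Finset.sum_add_distrib, Finset.sum_ite_eq']

lemma col_sum_basicMove {I J : ℕ} (i1 i2 : Fin I) (j1 j2 : Fin J) (j : Fin J) :
    ∑ i, basicMove i1 i2 j1 j2 (i, j) = 0 := by
  simp [basicMove, Prod.mk.injEq, ite_and, Finset.sum_sub_distrib,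
    Finset.sum_add_distrib, Finset.sum_ite_eq']

lemma measure_pt {I J : ℕ} (n n' : Fin I × Fin J → ℕ) (i1 i2 : Fin I) (j1 j2 : Fin J)
    (hii : i1 ≠ i2) (hjj : j1 ≠ j2)
    (h1 : n' (i1, j1) < n (i1, j1)) (h2 : n (i1, j2) < n' (i1, j2))
    (h3 : n' (i2, j2) < n (i2, j2)) (p : Fin I × Fin J) :
    ((adjust n i1 i2 j1 j2 p : ℤ) - n' p).natAbs
      + ((if p = (i1, j1) then 1 else 0) + (if p = (i2, j2) then 1 else 0))
      ≤ ((n p : ℤ) - n' p).natAbs + (if p = (i2, j1) then 1 else 0) := by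
  obtain ⟨i, j⟩ := p
  simp only [adjust, Prod.mk.injEq]
  by_cases hi1 : i = i1 <;> by_cases hi2 : i = i2 <;>
    by_cases hj1 : j = j1 <;> by_cases hj2 : j = j2 <;>
    simp_all <;> omega

def Conn {I J : ℕ} (n n' : Fin I × Fin J → ℕ) : Prop :=
  ∃ L : List (Fin I × Fin J → ℤ),
      (∀ m ∈ L, ∃ (i1 i2 : Fin I) (j1 j2 : Fin J), i1 ≠ i2 ∧ j1 ≠ j2 ∧
        (m = basicMove i1 i2 j1 j2 ∨ m = -basicMove i1 i2 j1 j2)) ∧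
      ((fun p => (n p : ℤ)) + L.sum = fun p => (n' p : ℤ)) ∧
      (∀ k : ℕ, ∀ p : Fin I × Fin J, 0 ≤ (n p : ℤ) + (L.take k).sum p)

lemma conn_aux {I J : ℕ} (N : ℕ) : ∀ (n n' : Fin I × Fin J → ℕ),
    (∀ i, ∑ j, n (i, j) = ∑ j, n' (i, j)) →
    (∀ j, ∑ i, n (i, j) = ∑ i, n' (i, j)) →
    (∑ p, ((n p : ℤ) - n' p).natAbs) ≤ N → Conn n n' := by
  induction N with
  | zero =>
    intro n n' hrow hcol hd
    have heq : ∀ p, n p = n' p := by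
      intro p
      have h1 : ((n p : ℤ) - n' p).natAbs = 0 :=
        Finset.sum_eq_zero_iff.mp (Nat.le_zero.mp hd) p (Finset.mem_univ p)
      omega
    exact ⟨[], by simp, by funext p; simp [heq p], by intro k p; simp⟩
  | succ N ih =>
    intro n n' hrow hcol hd
    by_cases hne : ∀ p, n p = n' p
    · exact ⟨[], by simp, by funext p; simp [hne p], by intro k p; simp⟩
    push_neg at hne
    obtain ⟨⟨i0, j0⟩, hp0⟩ := hne
    have hex1 : ∃ i1 j1, n' (i1, j1) < n (i1, j1) := by
      rcases Nat.lt_or_ge (n (i0, j0)) (n' (i0, j0)) with h | h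
      · by_contra hc
        push_neg at hc
        have hlt : ∑ j, n (i0, j) < ∑ j, n' (i0, j) :=
          Finset.sum_lt_sum (fun j _ => hc i0 j) ⟨j0, Finset.mem_univ _, h⟩
        exact (Nat.ne_of_lt hlt) (hrow i0)
      · exact ⟨i0, j0, lt_of_le_of_ne h fun h' => hp0 h'.symm⟩
    obtain ⟨i1, j1, h1⟩ := hex1
    have hex2 : ∃ j2, n (i1, j2) < n' (i1, j2) := by
      by_contra hc
      push_neg at hc
      have hlt : ∑ j, n' (i1, j) < ∑ j, n (i1, j) :=
        Finset.sum_lt_sum (fun j _ => hc j) ⟨j1, Finset.mem_univ _, h1⟩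
      exact (Nat.ne_of_lt hlt) (hrow i1).symm
    obtain ⟨j2, h2⟩ := hex2
    have hex3 : ∃ i2, n' (i2, j2) < n (i2, j2) := by
      by_contra hc
      push_neg at hc
      have hlt : ∑ i, n (i, j2) < ∑ i, n' (i, j2) :=
        Finset.sum_lt_sum (fun i _ => hc i) ⟨i1, Finset.mem_univ _, h2⟩
      exact (Nat.ne_of_lt hlt) (hcol j2)
    obtain ⟨i2, h3⟩ := hex3
    have hii : i1 ≠ i2 := by rintro rfl; omega
    have hjj : j1 ≠ j2 := by rintro rfl; omega
    have key := adjust_cast n i1 i2 j1 j2 hii hjj (by omega) (by omega)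
    set n₂ := adjust n i1 i2 j1 j2 with hn₂
    set m := basicMove i1 i2 j2 j1 with hm
    -- sums are preserved
    have hrow₂ : ∀ i, ∑ j, n₂ (i, j) = ∑ j, n' (i, j) := by
      intro i
      have hz : (∑ j, (n₂ (i, j) : ℤ)) = ∑ j, (n' (i, j) : ℤ) := by
        calc ∑ j, (n₂ (i, j) : ℤ) = ∑ j, ((n (i, j) : ℤ) + m (i, j)) :=
              Finset.sum_congr rfl fun j _ => key (i, j)
          _ = (∑ j, (n (i, j) : ℤ)) + ∑ j, m (i, j) := Finset.sum_add_distrib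
          _ = ∑ j, (n (i, j) : ℤ) := by rw [hm, row_sum_basicMove, add_zero]
          _ = ∑ j, (n' (i, j) : ℤ) := by exact_mod_cast hrow i
      exact_mod_cast hz
    have hcol₂ : ∀ j, ∑ i, n₂ (i, j) = ∑ i, n' (i, j) := by
      intro j
      have hz : (∑ i, (n₂ (i, j) : ℤ)) = ∑ i, (n' (i, j) : ℤ) := by
        calc ∑ i, (n₂ (i, j) : ℤ) = ∑ i, ((n (i, j) : ℤ) + m (i, j)) :=
              Finset.sum_congr rfl fun i _ => key (i, j)
          _ = (∑ i, (n (i, j) : ℤ)) + ∑ i, m (i, j) := Finset.sum_add_distrib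
          _ = ∑ i, (n (i, j) : ℤ) := by rw [hm, col_sum_basicMove, add_zero]
          _ = ∑ i, (n' (i, j) : ℤ) := by exact_mod_cast hcol j
      exact_mod_cast hz
    -- the measure strictly decreases
    have hd₂ : (∑ p, ((n₂ p : ℤ) - n' p).natAbs) ≤ N := by
      have hs := Finset.sum_le_sum
        (fun p (_ : p ∈ Finset.univ) => measure_pt n n' i1 i2 j1 j2 hii hjj h1 h2 h3 p)
      simp only [Finset.sum_add_distrib, Finset.sum_ite_eq', Finset.mem_univ,
        if_true] at hs
      rw [← hn₂] at hs
      omega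
    obtain ⟨L', hL'mem, hL'sum, hL'nn⟩ := ih n₂ n' hrow₂ hcol₂ hd₂
    refine ⟨m :: L', ?_, ?_, ?_⟩
    · intro x hx
      rcases List.mem_cons.mp hx with rfl | hx
      · exact ⟨i1, i2, j2, j1, hii, hjj.symm, Or.inl hm⟩
      · exact hL'mem x hx
    · have hfe : (fun p => (n p : ℤ)) + m = fun p => (n₂ p : ℤ) := by
        funext p; simpa using (key p).symm
      rw [List.sum_cons, ← add_assoc, hfe, hL'sum]
    · intro k p
      cases k with
      | zero => simp
      | succ k =>
        rw [List.take_succ_cons, List.sum_cons]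
        have hk := hL'nn k p
        have hkey := key p
        simp only [Pi.add_apply] at *
        omega

/-- Any two contingency tables with the same row sums and column sums are connected by
a sequence of signed basic moves through entrywise nonnegative intermediate tables. -/
theorem connected_by_basic_moves {I J : ℕ} (n n' : Fin I × Fin J → ℕ)
    (hrow : ∀ i : Fin I, ∑ j, n (i, j) = ∑ j, n' (i, j))
    (hcol : ∀ j : Fin J, ∑ i, n (i, j) = ∑ i, n' (i, j)) :
    ∃ L : List (Fin I × Fin J → ℤ),
      (∀ m ∈ L, ∃ (i1 i2 : Fin I) (j1 j2 : Fin J), i1 ≠ i2 ∧ j1 ≠ j2 ∧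
        (m = basicMove i1 i2 j1 j2 ∨ m = -basicMove i1 i2 j1 j2)) ∧
      ((fun p => (n p : ℤ)) + L.sum = fun p => (n' p : ℤ)) ∧
      (∀ k : ℕ, ∀ p : Fin I × Fin J, 0 ≤ (n p : ℤ) + (L.take k).sum p) := by
  exact conn_aux (∑ p, ((n p : ℤ) - n' p).natAbs) n n' hrow hcol le_rfl
end

section
/- The kernel (over ℤ) of the linear map sending an I×J integer matrix to its vector of row sums and column sums is generated, as a ℤ-module, by the basic moves of all 2×2 minors. -/
open Finset

def margins (R ι κ : Type*) [Semiring R] [Fintype ι] [Fintype κ] :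
    (ι × κ → R) →ₗ[R] (ι → R) × (κ → R) where
  toFun n := (fun i => ∑ j, n (i, j), fun j => ∑ i, n (i, j))
  map_add' n m := by ext <;> simp [sum_add_distrib]
  map_smul' c n := by ext <;> simp [mul_sum]

section Margins

variable {R ι κ : Type*} [Semiring R] [Fintype ι] [Fintype κ]

theorem mem_ker_margins_iff (n : ι × κ → R) :
    n ∈ LinearMap.ker (margins R ι κ) ↔
      (∀ i, ∑ j, n (i, j) = 0) ∧ (∀ j, ∑ i, n (i, j) = 0) := by
  simp [margins, Prod.ext_iff, funext_iff]

theorem margins_outerProduct (x : ι → R) (y : κ → R) :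
    margins R ι κ (fun p => x p.1 * y p.2) =
      (fun i => x i * ∑ j, y j, fun j => (∑ i, x i) * y j) := by
  simp [margins, mul_sum, sum_mul]

theorem outerProduct_mem_ker_margins {x : ι → R} {y : κ → R} (hx : ∑ i, x i = 0)
    (hy : ∑ j, y j = 0) : (fun p => x p.1 * y p.2) ∈ LinearMap.ker (margins R ι κ) := by
  simp [margins_outerProduct, hx, hy, Prod.ext_iff, funext_iff]

end Margins

def basicMoves (I J : ℕ) : Set (Fin I × Fin J → ℤ) :=
  {m | ∃ (i1 i2 : Fin I) (j1 j2 : Fin J), i1 ≠ i2 ∧ j1 ≠ j2 ∧ m = basicMove i1 i2 j1 j2}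

section BasicMove

variable {I J : ℕ}

theorem basicMove_eq_outerProduct (i1 i2 : Fin I) (j1 j2 : Fin J) :
    basicMove i1 i2 j1 j2 = fun p =>
      (Pi.single i1 1 - Pi.single i2 1 : Fin I → ℤ) p.1 *
        (Pi.single j1 1 - Pi.single j2 1 : Fin J → ℤ) p.2 := by
  ext ⟨a, b⟩
  simp only [basicMove, Prod.ext_iff, Pi.sub_apply, Pi.single_apply, ite_and]
  split_ifs <;> simp

theorem basicMove_mem_ker_margins (i1 i2 : Fin I) (j1 j2 : Fin J) :
    basicMove i1 i2 j1 j2 ∈ LinearMap.ker (margins ℤ (Fin I) (Fin J)) := by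
  rw [basicMove_eq_outerProduct]
  exact outerProduct_mem_ker_margins (by simp [sum_sub_distrib]) (by simp [sum_sub_distrib])

theorem basicMove_self_left (i : Fin I) (j1 j2 : Fin J) : basicMove i i j1 j2 = 0 := by
  ext
  simp [basicMove]

theorem basicMove_self_right (i1 i2 : Fin I) (j : Fin J) : basicMove i1 i2 j j = 0 := by
  ext
  simp [basicMove]

theorem basicMove_mem_span (i1 i2 : Fin I) (j1 j2 : Fin J) :
    basicMove i1 i2 j1 j2 ∈ Submodule.span ℤ (basicMoves I J) := by
  obtain rfl | hi := eq_or_ne i1 i2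
  · simp [basicMove_self_left]
  obtain rfl | hj := eq_or_ne j1 j2
  · simp [basicMove_self_right]
  exact Submodule.subset_span ⟨i1, i2, j1, j2, hi, hj, rfl⟩

theorem sum_smul_basicMove_eq {n : Fin I × Fin J → ℤ}
    (hn : n ∈ LinearMap.ker (margins ℤ (Fin I) (Fin J))) (i₀ : Fin I) (j₀ : Fin J) :
    ∑ p, n p • basicMove p.1 i₀ p.2 j₀ = n := by
  obtain ⟨hrow, hcol⟩ := (mem_ker_margins_iff n).1 hn
  ext ⟨a, b⟩
  simp only [Finset.sum_apply, Pi.smul_apply, basicMove_eq_outerProduct, smul_eq_mul, Pi.sub_apply,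
    Pi.single_apply, mul_sub, sub_mul, sum_sub_distrib, Fintype.sum_prod_type]
  simp [hrow, hcol, sum_ite_eq]

theorem span_basicMoves_eq_ker_margins :
    Submodule.span ℤ (basicMoves I J) = LinearMap.ker (margins ℤ (Fin I) (Fin J)) := by
  refine le_antisymm (Submodule.span_le.2 ?_) fun n hn => ?_
  · rintro _ ⟨i1, i2, j1, j2, -, -, rfl⟩
    exact basicMove_mem_ker_margins i1 i2 j1 j2
  obtain _ | ⟨⟨i₀, j₀⟩⟩ := isEmpty_or_nonempty (Fin I × Fin J)
  · simp [Subsingleton.elim n 0]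
  rw [← sum_smul_basicMove_eq hn i₀ j₀]
  exact Submodule.sum_mem _ fun p _ => Submodule.smul_mem _ _ (basicMove_mem_span _ _ _ _)

end BasicMove

/-- The kernel of the map sending an integer matrix to its row and column sums is
spanned over ℤ by the basic moves of all 2×2 minors. -/
theorem ker_margins_eq_span_basicMoves {I J : ℕ} (n : Fin I × Fin J → ℤ) :
    ((∀ i : Fin I, ∑ j, n (i, j) = 0) ∧ (∀ j : Fin J, ∑ i, n (i, j) = 0)) ↔
      n ∈ Submodule.span ℤ
        {m : Fin I × Fin J → ℤ | ∃ (i1 i2 : Fin I) (j1 j2 : Fin J),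
          i1 ≠ i2 ∧ j1 ≠ j2 ∧ m = basicMove i1 i2 j1 j2} := by
  rw [← mem_ker_margins_iff, ← span_basicMoves_eq_ker_margins]
  rfl
end

section
/- For 2×2 tables of nonnegative integers with fixed positive row and column sums and entrywise upper bounds b(i,j) ≥ 1, any two tables in the same bounded fiber are connected by the single basic move ±(+1,−1;−1,+1) while staying within the bounds. -/
/-- For 2×2 tables with fixed positive row and column sums and positive entrywise
bounds, any two tables of the bounded fiber are connected by the single basic move
`±(+1,−1;−1,+1)` while staying within the bounds. -/
theorem connected_2x2_bounded (n n' b : Fin 2 × Fin 2 → ℕ)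
    (hb : ∀ p, 1 ≤ b p) (hnb : ∀ p, n p ≤ b p) (hn'b : ∀ p, n' p ≤ b p)
    (hrowpos : ∀ i : Fin 2, 0 < ∑ j, n (i, j))
    (hcolpos : ∀ j : Fin 2, 0 < ∑ i, n (i, j))
    (hrow : ∀ i : Fin 2, ∑ j, n (i, j) = ∑ j, n' (i, j))
    (hcol : ∀ j : Fin 2, ∑ i, n (i, j) = ∑ i, n' (i, j)) :
    ∃ L : List (Fin 2 × Fin 2 → ℤ),
      (∀ m ∈ L, m = basicMove 0 1 0 1 ∨ m = -basicMove 0 1 0 1) ∧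
      ((fun p => (n p : ℤ)) + L.sum = fun p => (n' p : ℤ)) ∧
      (∀ k : ℕ, ∀ p : Fin 2 × Fin 2,
        0 ≤ (n p : ℤ) + (L.take k).sum p ∧ (n p : ℤ) + (L.take k).sum p ≤ (b p : ℤ)) := by
  set m : Fin 2 × Fin 2 → ℤ := basicMove 0 1 0 1 with hm
  have hm00 : m (0,0) = 1 := by decide
  have hm01 : m (0,1) = -1 := by decide
  have hm10 : m (1,0) = -1 := by decide
  have hm11 : m (1,1) = 1 := by decide
  set d : ℤ := (n' (0,0) : ℤ) - n (0,0) with hd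
  have h1 : (n (0,0) : ℤ) + n (0,1) = n' (0,0) + n' (0,1) := by
    have := hrow 0; simp [Fin.sum_univ_two] at this; exact_mod_cast this
  have h2 : (n (0,0) : ℤ) + n (1,0) = n' (0,0) + n' (1,0) := by
    have := hcol 0; simp [Fin.sum_univ_two] at this; exact_mod_cast this
  have h3 : (n (1,0) : ℤ) + n (1,1) = n' (1,0) + n' (1,1) := by
    have := hrow 1; simp [Fin.sum_univ_two] at this; exact_mod_cast this
  have e00 : (n' (0,0) : ℤ) = n (0,0) + d := by omega
  have e01 : (n' (0,1) : ℤ) = n (0,1) - d := by omega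
  have e10 : (n' (1,0) : ℤ) = n (1,0) - d := by omega
  have e11 : (n' (1,1) : ℤ) = n (1,1) + d := by omega
  have b00 := hnb (0,0); have b01 := hnb (0,1); have b10 := hnb (1,0); have b11 := hnb (1,1)
  have c00 := hn'b (0,0); have c01 := hn'b (0,1); have c10 := hn'b (1,0); have c11 := hn'b (1,1)
  refine ⟨List.replicate d.natAbs (if 0 ≤ d then m else -m), ?_, ?_, ?_⟩
  · intro x hx
    rw [List.eq_of_mem_replicate hx]
    split
    · left; rfl
    · right; rfl
  · funext p
    rw [List.sum_replicate]
    simp only [Pi.add_apply]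
    by_cases hdp : 0 ≤ d
    · have habs : (d.natAbs : ℤ) = d := Int.natAbs_of_nonneg hdp
      simp only [if_pos hdp, Pi.smul_apply, nsmul_eq_mul, habs]
      obtain ⟨i, j⟩ := p
      fin_cases i <;> fin_cases j <;>
        simp only [Fin.mk_zero, Fin.mk_one, Fin.isValue, hm00, hm01, hm10, hm11,
          mul_one, mul_neg_one] <;> omega
    · have habs : (d.natAbs : ℤ) = -d := by omega
      simp only [if_neg hdp, Pi.smul_apply, Pi.neg_apply, nsmul_eq_mul, habs]
      obtain ⟨i, j⟩ := p
      fin_cases i <;> fin_cases j <;>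
        simp only [Fin.mk_zero, Fin.mk_one, Fin.isValue, hm00, hm01, hm10, hm11,
          mul_one, mul_neg_one, mul_neg, neg_neg] <;> omega
  · intro k p
    rw [List.take_replicate, List.sum_replicate]
    have ht : ((min k d.natAbs : ℕ) : ℤ) ≤ d.natAbs := by
      have : min k d.natAbs ≤ d.natAbs := min_le_right _ _
      exact_mod_cast this
    by_cases hdp : 0 ≤ d
    · have habs : (d.natAbs : ℤ) = d := Int.natAbs_of_nonneg hdp
      rw [habs] at ht
      simp only [if_pos hdp, Pi.add_apply, Pi.smul_apply, nsmul_eq_mul]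
      obtain ⟨i, j⟩ := p
      fin_cases i <;> fin_cases j <;>
        simp only [Fin.mk_zero, Fin.mk_one, Fin.isValue, hm00, hm01, hm10, hm11,
          mul_one, mul_neg_one] <;> omega
    · have habs : (d.natAbs : ℤ) = -d := by omega
      rw [habs] at ht
      simp only [if_neg hdp, Pi.add_apply, Pi.smul_apply, Pi.neg_apply, nsmul_eq_mul]
      obtain ⟨i, j⟩ := p
      fin_cases i <;> fin_cases j <;>
        simp only [Fin.mk_zero, Fin.mk_one, Fin.isValue, hm00, hm01, hm10, hm11,
          mul_one, mul_neg_one, mul_neg, neg_neg] <;> omega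
end

section
/- There exist two 3×3 tables of nonnegative integers with equal row and column sums, both vanishing on the diagonal cells (1,1), (2,2), (3,3), that cannot be connected by basic moves if all intermediate tables are required to be nonnegative and to vanish on the diagonal. Specifically, the permutation matrices of the two 3-cycles (which are 0 on the diagonal) have equal row and column sums (all equal to 1) but no single basic move applied to either keeps the table nonnegative with zero diagonal. -/
/-- The permutation matrix of the 3-cycle (1 2 3). -/
def n₁ : Fin 3 × Fin 3 → ℕ := fun p => if p = (0, 1) ∨ p = (1, 2) ∨ p = (2, 0) then 1 else 0

/-- The permutation matrix of the 3-cycle (1 3 2). -/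
def n₂ : Fin 3 × Fin 3 → ℕ := fun p => if p = (0, 2) ∨ p = (1, 0) ∨ p = (2, 1) then 1 else 0

lemma basicMove_apply_ne_zero {I J : ℕ} {i1 i2 i : Fin I} {j1 j2 j : Fin J}
    (hi : i1 ≠ i2) (hj : j1 ≠ j2) (hi' : i = i1 ∨ i = i2) (hj' : j = j1 ∨ j = j2) :
    basicMove i1 i2 j1 j2 (i, j) ≠ 0 := by
  rcases hi' with rfl | rfl <;> rcases hj' with rfl | rfl <;>
    simp [basicMove, hi, hj, hi.symm, hj.symm]

lemma Fin.exists_mem_pair_inter_pair {i1 i2 j1 j2 : Fin 3} (hi : i1 ≠ i2) (hj : j1 ≠ j2) :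
    ∃ k, (k = i1 ∨ k = i2) ∧ (k = j1 ∨ k = j2) := by
  revert i1 i2 j1 j2
  decide

lemma exists_basicMove_apply_diag_ne_zero {i1 i2 j1 j2 : Fin 3} (hi : i1 ≠ i2) (hj : j1 ≠ j2) :
    ∃ k, basicMove i1 i2 j1 j2 (k, k) ≠ 0 :=
  let ⟨k, hki, hkj⟩ := Fin.exists_mem_pair_inter_pair hi hj
  ⟨k, basicMove_apply_ne_zero hi hj hki hkj⟩

/-- The two 3×3 permutation matrices of the fixed-point-free permutations of `{1,2,3}`
have equal row and column sums (all `1`) and zero diagonal, yet they cannot be connected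
by basic moves through nonnegative tables with zero diagonal: indeed no single signed
basic move applied to either of them keeps the table nonnegative with zero diagonal. -/
theorem diagonal_zero_not_connected :
    (∀ i : Fin 3, ∑ j, n₁ (i, j) = ∑ j, n₂ (i, j)) ∧
    (∀ j : Fin 3, ∑ i, n₁ (i, j) = ∑ i, n₂ (i, j)) ∧
    (∀ i : Fin 3, n₁ (i, i) = 0 ∧ n₂ (i, i) = 0) ∧
    ¬ (∃ L : List (Fin 3 × Fin 3 → ℤ),
        (∀ m ∈ L, ∃ (i1 i2 j1 j2 : Fin 3), i1 ≠ i2 ∧ j1 ≠ j2 ∧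
          (m = basicMove i1 i2 j1 j2 ∨ m = -basicMove i1 i2 j1 j2)) ∧
        ((fun p => (n₁ p : ℤ)) + L.sum = fun p => (n₂ p : ℤ)) ∧
        (∀ k : ℕ, ∀ p : Fin 3 × Fin 3,
          0 ≤ (n₁ p : ℤ) + (L.take k).sum p ∧
          (p.1 = p.2 → (n₁ p : ℤ) + (L.take k).sum p = 0))) ∧
    (∀ t ∈ [n₁, n₂], ∀ (i1 i2 j1 j2 : Fin 3), i1 ≠ i2 → j1 ≠ j2 → ∀ ε : ℤ,
      ε = 1 ∨ ε = -1 →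
      ¬ (∀ p : Fin 3 × Fin 3,
          0 ≤ (t p : ℤ) + ε * basicMove i1 i2 j1 j2 p ∧
          (p.1 = p.2 → (t p : ℤ) + ε * basicMove i1 i2 j1 j2 p = 0))) := by
  have hdiag : ∀ i : Fin 3, n₁ (i, i) = 0 ∧ n₂ (i, i) = 0 := by decide
  refine ⟨by decide, by decide, hdiag, ?_, ?_⟩
  · rintro ⟨_ | ⟨m, rest⟩, hmoves, hsum, hpath⟩
    · simpa [n₁, n₂] using congrFun hsum (0, 1)
    obtain ⟨i1, i2, j1, j2, hi, hj, hm⟩ := hmoves m List.mem_cons_self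
    obtain ⟨k, hk⟩ := exists_basicMove_apply_diag_ne_zero hi hj
    have hmk : m (k, k) = 0 := by simpa [(hdiag k).1] using (hpath 1 (k, k)).2 rfl
    rcases hm with rfl | rfl
    · exact hk hmk
    · exact hk (by simpa using hmk)
  · intro t ht i1 i2 j1 j2 hi hj ε hε hmove
    obtain ⟨k, hk⟩ := exists_basicMove_apply_diag_ne_zero hi hj
    have htk : (t (k, k) : ℤ) = 0 := by
      simp only [List.mem_cons, List.not_mem_nil, or_false] at ht
      rcases ht with rfl | rfl <;> simp [hdiag k]
    have hε0 : ε ≠ 0 := by rcases hε with rfl | rfl <;> norm_num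
    simpa [htk, hε0, hk] using (hmove (k, k)).2 rfl
end

section
/- For I, J ≥ 4, any two I×J tables of nonnegative integers with equal strictly positive row sums and equal strictly positive column sums, both vanishing on all diagonal cells (i,i) for i ≤ min(I,J), are connected by a sequence of signed basic moves such that every intermediate table is entrywise nonnegative and vanishes on all diagonal cells. -/
namespace DiagonalZeros

variable {I J : ℕ} {f g : Fin I × Fin J → ℤ}

lemma basicMove_eq_sum_single (a b : Fin I) (c d : Fin J) :
    basicMove a b c d = Pi.single (a, c) 1 + Pi.single (b, d) 1 + Pi.single (a, d) (-1)
      + Pi.single (b, c) (-1) := by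
  funext p
  simp only [basicMove, Pi.add_apply, Pi.single_apply]
  split_ifs <;> norm_num

-- Tables are `ℤ`-valued so that moves can be added to them.
def Admissible (f : Fin I × Fin J → ℤ) : Prop :=
  (∀ p, 0 ≤ f p) ∧ ∀ p : Fin I × Fin J, (p.1 : ℕ) = p.2 → f p = 0

lemma Admissible.val_ne (hf : Admissible f) (hg : Admissible g)
    {p : Fin I × Fin J} (h : f p ≠ g p) : (p.1 : ℕ) ≠ p.2 := fun hp =>
  h ((hf.2 p hp).trans (hg.2 p hp).symm)

lemma admissible_natCast {t : Fin I × Fin J → ℕ}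
    (ht : ∀ p : Fin I × Fin J, (p.1 : ℕ) = p.2 → t p = 0) : Admissible fun p => (t p : ℤ) :=
  ⟨fun p => Int.natCast_nonneg _, fun p hp => by simp [ht p hp]⟩

lemma Admissible.add_basicMove (hf : Admissible f) {a b : Fin I} {c d : Fin J} (hab : a ≠ b)
    (hcd : c ≠ d) (hac : (a : ℕ) ≠ c) (hbd : (b : ℕ) ≠ d)
    (had : 0 < f (a, d)) (hbc : 0 < f (b, c)) : Admissible (f + basicMove a b c d) := by
  have had' : (a : ℕ) ≠ d := fun h => by have := hf.2 (a, d) h; omega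
  have hbc' : (b : ℕ) ≠ c := fun h => by have := hf.2 (b, c) h; omega
  constructor
  · rintro ⟨i, j⟩
    have := hf.1 (i, j)
    simp only [Pi.add_apply, basicMove, Prod.mk.injEq]
    split_ifs <;> grind
  · rintro ⟨i, j⟩ (hij : (i : ℕ) = j)
    have := hf.2 (i, j) hij
    simp only [Pi.add_apply, basicMove, Prod.mk.injEq]
    split_ifs <;> grind

def IsMove (m : Fin I × Fin J → ℤ) : Prop :=
  ∃ (i1 i2 : Fin I) (j1 j2 : Fin J), i1 ≠ i2 ∧ j1 ≠ j2 ∧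
    (m = basicMove i1 i2 j1 j2 ∨ m = -basicMove i1 i2 j1 j2)

lemma IsMove.neg {m : Fin I × Fin J → ℤ} (h : IsMove m) : IsMove (-m) := by
  obtain ⟨i1, i2, j1, j2, hi, hj, rfl | rfl⟩ := h
  exacts [⟨i1, i2, j1, j2, hi, hj, .inr rfl⟩, ⟨i1, i2, j1, j2, hi, hj, .inl (neg_neg _)⟩]

def margins : (Fin I × Fin J → ℤ) →+ (Fin I → ℤ) × (Fin J → ℤ) where
  toFun f := (fun i => ∑ j, f (i, j), fun j => ∑ i, f (i, j))
  map_zero' := by ext <;> simp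
  map_add' f g := by ext <;> simp [Finset.sum_add_distrib]

lemma margins_basicMove (a b : Fin I) (c d : Fin J) : margins (basicMove a b c d) = 0 := by
  ext k <;>
  simp only [margins, AddMonoidHom.coe_mk, ZeroHom.coe_mk, basicMove, Prod.mk.injEq, ite_and,
    Finset.sum_sub_distrib, Finset.sum_add_distrib, Prod.fst_zero, Prod.snd_zero,
    Pi.zero_apply]
  · by_cases h₁ : k = a <;> by_cases h₂ : k = b <;> simp [h₁, h₂]
  · by_cases h₁ : k = c <;> by_cases h₂ : k = d <;> simp [h₁, h₂]

lemma IsMove.margins_eq_zero {m : Fin I × Fin J → ℤ} (h : IsMove m) : margins m = 0 := by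
  obtain ⟨i1, i2, j1, j2, -, -, rfl | rfl⟩ := h <;> simp [margins_basicMove]

def Step (f g : Fin I × Fin J → ℤ) : Prop :=
  Admissible f ∧ Admissible g ∧ IsMove (g - f)

lemma Step.symm (h : Step f g) : Step g f :=
  ⟨h.2.1, h.1, by simpa using h.2.2.neg⟩

lemma Step.margins_eq (h : Step f g) : margins f = margins g := by
  have := h.2.2.margins_eq_zero
  rw [map_sub, sub_eq_zero] at this
  exact this.symm

lemma step_add_basicMove (hf : Admissible f) {a b : Fin I}
    {c d : Fin J} (hab : a ≠ b) (hcd : c ≠ d) (hac : (a : ℕ) ≠ c) (hbd : (b : ℕ) ≠ d)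
    (had : 0 < f (a, d)) (hbc : 0 < f (b, c)) : Step f (f + basicMove a b c d) :=
  ⟨hf, hf.add_basicMove hab hcd hac hbd had hbc,
    by rw [add_sub_cancel_left]; exact ⟨a, b, c, d, hab, hcd, .inl rfl⟩⟩

abbrev Reach : (Fin I × Fin J → ℤ) → (Fin I × Fin J → ℤ) → Prop :=
  Relation.ReflTransGen Step

lemma Reach.symm (h : Reach f g) : Reach g f := by
  induction h with
  | refl => rfl
  | tail _ hs ih => exact .head hs.symm ih

lemma Reach.margins_eq (h : Reach f g) : margins f = margins g := by
  induction h with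
  | refl => rfl
  | tail _ hs ih => exact ih.trans hs.margins_eq

lemma Reach.sum_row_eq (h : Reach f g) (i : Fin I) : ∑ j, f (i, j) = ∑ j, g (i, j) :=
  congrFun (congrArg Prod.fst h.margins_eq) i

lemma Reach.sum_col_eq (h : Reach f g) (j : Fin J) : ∑ i, f (i, j) = ∑ i, g (i, j) :=
  congrFun (congrArg Prod.snd h.margins_eq) j

lemma Reach.admissible (h : Reach f g) (hf : Admissible f) :
    Admissible g := by
  rcases h.cases_tail with rfl | ⟨_, _, hs⟩
  exacts [hf, hs.2.1]

lemma Reach.exists_moves (h : Reach f g) (hf : Admissible f) :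
    ∃ L : List (Fin I × Fin J → ℤ), (∀ m ∈ L, IsMove m) ∧ f + L.sum = g ∧
      ∀ k, Admissible (f + (L.take k).sum) := by
  induction h using Relation.ReflTransGen.head_induction_on with
  | refl => exact ⟨[], by simp, by simp, fun k => by simpa using hf⟩
  | @head f₀ f₁ hs _ ih =>
    obtain ⟨L, hL, hsum, hadm⟩ := ih hs.2.1
    refine ⟨(f₁ - f₀) :: L, ?_, ?_, ?_⟩
    · simpa using ⟨hs.2.2, hL⟩
    · rw [List.sum_cons, ← add_assoc, add_sub_cancel, hsum]
    · rintro (_ | k)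
      · simpa using hf
      · simpa [← add_assoc] using hadm k

def l1dist (f g : Fin I × Fin J → ℤ) : ℕ := ∑ p, (f p - g p).natAbs

lemma l1dist_comm (f g : Fin I × Fin J → ℤ) : l1dist f g = l1dist g f :=
  Finset.sum_congr rfl fun p _ => by rw [← Int.natAbs_neg, neg_sub]

lemma l1dist_add_single (f g : Fin I × Fin J → ℤ) (q : Fin I × Fin J) (t : ℤ) :
    l1dist (f + Pi.single q t) g + (f q - g q).natAbs = l1dist f g + (f q + t - g q).natAbs := by
  have hrest :
      ∑ p ∈ Finset.univ.erase q, ((f + Pi.single q t : Fin I × Fin J → ℤ) p - g p).natAbs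
        = ∑ p ∈ Finset.univ.erase q, (f p - g p).natAbs :=
    Finset.sum_congr rfl fun p hp => by
      rw [Pi.add_apply, Pi.single_eq_of_ne (Finset.ne_of_mem_erase hp), add_zero]
  unfold l1dist
  rw [← Finset.add_sum_erase _ _ (Finset.mem_univ q),
    ← Finset.add_sum_erase _ _ (Finset.mem_univ q), hrest]
  simp only [Pi.add_apply, Pi.single_eq_same]
  ring

lemma l1dist_add_basicMove (f g : Fin I × Fin J → ℤ) {a b : Fin I} {c d : Fin J}
    (hab : a ≠ b) (hcd : c ≠ d) :
    l1dist (f + basicMove a b c d) g + (f (a, c) - g (a, c)).natAbs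
        + (f (b, d) - g (b, d)).natAbs + (f (a, d) - g (a, d)).natAbs
        + (f (b, c) - g (b, c)).natAbs
      = l1dist f g + (f (a, c) + 1 - g (a, c)).natAbs + (f (b, d) + 1 - g (b, d)).natAbs
        + (f (a, d) - 1 - g (a, d)).natAbs + (f (b, c) - 1 - g (b, c)).natAbs := by
  have h₁ := l1dist_add_single f g (a, c) 1
  have h₂ := l1dist_add_single (f + Pi.single (a, c) 1) g (b, d) 1
  have h₃ := l1dist_add_single (f + Pi.single (a, c) 1 + Pi.single (b, d) 1) g (a, d) (-1)
  have h₄ := l1dist_add_single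
    (f + Pi.single (a, c) 1 + Pi.single (b, d) 1 + Pi.single (a, d) (-1)) g (b, c) (-1)
  simp only [Pi.add_apply, Pi.single_apply, Prod.mk.injEq, hab, hab.symm, hcd, hcd.symm,
    and_false, false_and, and_self, if_false, add_zero] at h₁ h₂ h₃ h₄
  rw [basicMove_eq_sum_single, ← add_assoc, ← add_assoc, ← add_assoc]
  omega

lemma exists_lt_of_sum_eq_of_lt {K M : Type*} [Fintype K] [AddCommMonoid M] [LinearOrder M]
    [IsOrderedCancelAddMonoid M] {u v : K → M} (h : ∑ k, u k = ∑ k, v k) {k₀ : K}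
    (hk : u k₀ < v k₀) : ∃ k, v k < u k := by
  by_contra! H
  exact (Finset.sum_lt_sum (fun k _ => H k) ⟨k₀, Finset.mem_univ _, hk⟩).ne h

def HasDescentMove (f g : Fin I × Fin J → ℤ) : Prop :=
  ∃ (i r : Fin I) (e c : Fin J),
    g (i, e) < f (i, e) ∧ f (i, c) < g (i, c) ∧ g (r, c) < f (r, c) ∧ (r : ℕ) ≠ e

lemma exists_step_l1dist_lt (hf : Admissible f) (hg : Admissible g)
    (h : HasDescentMove f g) : ∃ f', Step f f' ∧ l1dist f' g < l1dist f g := by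
  obtain ⟨i, r, e, c, hie, hic, hrc, hre⟩ := h
  have hir : i ≠ r := by rintro rfl; exact lt_asymm hic hrc
  have hce : c ≠ e := by rintro rfl; exact lt_asymm hie hic
  have := hg.1 (i, e)
  have := hg.1 (r, c)
  refine ⟨f + basicMove i r c e,
    step_add_basicMove hf hir hce (hf.val_ne hg hic.ne) hre (by omega) (by omega), ?_⟩
  have := l1dist_add_basicMove f g hir hce
  omega

/-- The sign pattern of `f - g` when neither table has a descent move towards the other:
positive at `(iₖ, jₖ)`, negative at `(iₖ, jₖ₊₁)`, and row `iₖ₊₁` has the index of column `jₖ`. -/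
structure IsTriangle (f g : Fin I × Fin J → ℤ) (i₁ i₂ i₃ : Fin I) (j₁ j₂ j₃ : Fin J) : Prop where
  pos₁ : g (i₁, j₁) < f (i₁, j₁)
  neg₁ : f (i₁, j₂) < g (i₁, j₂)
  pos₂ : g (i₂, j₂) < f (i₂, j₂)
  neg₂ : f (i₂, j₃) < g (i₂, j₃)
  pos₃ : g (i₃, j₃) < f (i₃, j₃)
  neg₃ : f (i₃, j₁) < g (i₃, j₁)
  val₁ : (i₁ : ℕ) = j₃
  val₂ : (i₂ : ℕ) = j₁
  val₃ : (i₃ : ℕ) = j₂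

variable {i₁ i₂ i₃ : Fin I} {j₁ j₂ j₃ : Fin J}

lemma IsTriangle.rotate (t : IsTriangle f g i₁ i₂ i₃ j₁ j₂ j₃) :
    IsTriangle f g i₂ i₃ i₁ j₂ j₃ j₁ :=
  ⟨t.pos₂, t.neg₂, t.pos₃, t.neg₃, t.pos₁, t.neg₁, t.val₂, t.val₃, t.val₁⟩

lemma IsTriangle.val_ne (t : IsTriangle f g i₁ i₂ i₃ j₁ j₂ j₃) (hf : Admissible f)
    (hg : Admissible g) : (i₁ : ℕ) ≠ j₁ ∧ (i₂ : ℕ) ≠ j₂ ∧ (i₃ : ℕ) ≠ j₃ :=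
  ⟨hf.val_ne hg t.pos₁.ne', hf.val_ne hg t.pos₂.ne', hf.val_ne hg t.pos₃.ne'⟩

lemma exists_isTriangle (hrow : ∀ i, ∑ j, f (i, j) = ∑ j, g (i, j))
    (hcol : ∀ j, ∑ i, f (i, j) = ∑ i, g (i, j)) (hne : f ≠ g)
    (hfg : ¬HasDescentMove f g) (hgf : ¬HasDescentMove g f) :
    ∃ (i₁ i₂ i₃ : Fin I) (j₁ j₂ j₃ : Fin J), IsTriangle f g i₁ i₂ i₃ j₁ j₂ j₃ := by
  obtain ⟨i₁, j₁, pos₁⟩ : ∃ i j, g (i, j) < f (i, j) := by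
    obtain ⟨⟨i, j⟩, hp⟩ := Function.ne_iff.1 hne
    rcases hp.lt_or_gt with h | h
    · exact ⟨i, exists_lt_of_sum_eq_of_lt (hrow i) h⟩
    · exact ⟨i, j, h⟩
  obtain ⟨j₂, neg₁⟩ := exists_lt_of_sum_eq_of_lt (hrow i₁).symm pos₁
  obtain ⟨i₂, pos₂⟩ := exists_lt_of_sum_eq_of_lt (hcol j₂) neg₁
  obtain ⟨j₃, neg₂⟩ := exists_lt_of_sum_eq_of_lt (hrow i₂).symm pos₂
  obtain ⟨i₃, pos₃⟩ := exists_lt_of_sum_eq_of_lt (hcol j₃) neg₂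
  obtain ⟨j₄, neg₃⟩ := exists_lt_of_sum_eq_of_lt (hrow i₃).symm pos₃
  have val₂ : (i₂ : ℕ) = j₁ := by
    by_contra h; exact hfg ⟨i₁, i₂, j₁, j₂, pos₁, neg₁, pos₂, h⟩
  have val₃ : (i₃ : ℕ) = j₂ := by
    by_contra h; exact hfg ⟨i₂, i₃, j₂, j₃, pos₂, neg₂, pos₃, h⟩
  have val₁ : (i₁ : ℕ) = j₃ := by
    by_contra h; exact hgf ⟨i₂, i₁, j₃, j₂, neg₂, pos₂, neg₁, h⟩
  have hj₄ : j₄ = j₁ := by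
    by_contra h; exact hgf ⟨i₃, i₂, j₄, j₃, neg₃, pos₃, neg₂, by omega⟩
  exact ⟨i₁, i₂, i₃, j₁, j₂, j₃, pos₁, neg₁, pos₂, neg₂, pos₃, hj₄ ▸ neg₃, val₁, val₂, val₃⟩

lemma IsTriangle.exists_reach_hasDescentMove_of_pos_col (t : IsTriangle f g i₁ i₂ i₃ j₁ j₂ j₃)
    (hf : Admissible f) (hg : Admissible g) (hgf : ¬HasDescentMove g f) {w : Fin I}
    (hw₁ : w ≠ i₁) (hw₂ : w ≠ i₂) (hw₃ : w ≠ i₃) (hw : 0 < f (w, j₂)) :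
    ∃ f', Reach f f' ∧ l1dist f' g ≤ l1dist f g ∧ HasDescentMove f' g := by
  obtain ⟨d₁, d₂, d₃⟩ := t.val_ne hf hg
  have v₁ := t.val₁
  have v₂ := t.val₂
  have v₃ := t.val₃
  have hj : j₂ ≠ j₁ := by omega
  have hi : i₃ ≠ i₁ := by omega
  have hwj₁ : g (w, j₁) ≤ f (w, j₁) := by
    by_contra h; exact hgf ⟨i₁, w, j₂, j₁, t.neg₁, t.pos₁, not_le.1 h, by omega⟩
  have := hg.1 (i₁, j₁)
  have := t.pos₁
  have := t.neg₁
  -- shifting a unit from `(i₁, j₁)`, `(w, j₂)` to `(i₁, j₂)`, `(w, j₁)` costs nothing and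
  -- leaves a descent move on rows `i₃`, `w`
  refine ⟨f + basicMove i₁ w j₂ j₁, .single (step_add_basicMove hf (Ne.symm hw₁) hj
    (hf.val_ne hg t.neg₁.ne) (by omega) (by omega) hw), ?_, i₃, w, j₃, j₁, ?_, ?_, ?_, by omega⟩
  · have := l1dist_add_basicMove f g (Ne.symm hw₁) hj
    omega
  · simpa [basicMove, hi, hw₃.symm] using t.pos₃
  · simpa [basicMove, hi, hw₃.symm] using t.neg₃
  · simp only [Pi.add_apply, basicMove, Prod.mk.injEq, hw₁, hj.symm, and_self, ↓reduceIte,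
      zero_add, and_true, sub_zero, and_false, Order.lt_add_one_iff]
    exact hwj₁

lemma IsTriangle.exists_reach_hasDescentMove_of_pos_offCol (t : IsTriangle f g i₁ i₂ i₃ j₁ j₂ j₃)
    (hf : Admissible f) (hg : Admissible g) (hgf : ¬HasDescentMove g f) {y : Fin I}
    (hy₁ : y ≠ i₁) (hy₂ : y ≠ i₂) (hy₃ : y ≠ i₃) {x : Fin J} (hx₁ : x ≠ j₁) (hx₂ : x ≠ j₂)
    (hx₃ : x ≠ j₃) (hyx : 0 < f (y, x)) :
    ∃ f', Reach f f' ∧ l1dist f' g ≤ l1dist f g ∧ HasDescentMove f' g := by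
  obtain ⟨d₁, d₂, d₃⟩ := t.val_ne hf hg
  have v₁ := t.val₁
  have v₂ := t.val₂
  have v₃ := t.val₃
  have hi₁₂ : i₁ ≠ i₂ := by omega
  have hi₁₃ : i₁ ≠ i₃ := by omega
  have hi₂₃ : i₂ ≠ i₃ := by omega
  have hj₁₂ : j₁ ≠ j₂ := by omega
  have hj₂₃ : j₂ ≠ j₃ := by omega
  have hi₂x : g (i₂, x) ≤ f (i₂, x) := by
    by_contra h; exact hgf ⟨i₂, i₁, x, j₂, not_le.1 h, t.pos₂, t.neg₁, by omega⟩
  have := hg.1 (i₁, j₁)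
  have := hf.1 (i₁, x)
  have := hg.1 (i₂, j₂)
  have := t.pos₁
  have := t.neg₁
  have := t.pos₂
  -- route a unit of `(y, x)` through rows `i₁` and `i₂`; a descent move on rows `i₂`, `i₃` remains
  set f₁ := f + basicMove i₁ y x j₁ with hf₁
  have s₁ : Step f f₁ := step_add_basicMove hf hy₁.symm hx₁ (by omega) (by omega) (by omega) hyx
  have c₁ : f₁ (i₁, j₂) = f (i₁, j₂) := by simp [hf₁, basicMove, hx₂.symm, hj₁₂.symm]
  have c₂ : f₁ (i₂, x) = f (i₂, x) := by simp [hf₁, basicMove, hi₁₂.symm, hy₂.symm]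
  have c₃ : f₁ (i₁, x) = f (i₁, x) + 1 := by simp [hf₁, basicMove, hy₁.symm, hx₁]
  have c₄ : f₁ (i₂, j₂) = f (i₂, j₂) := by simp [hf₁, basicMove, hi₁₂.symm, hy₂.symm]
  have c₅ : f₁ (i₂, j₃) = f (i₂, j₃) := by simp [hf₁, basicMove, hi₁₂.symm, hy₂.symm]
  have c₆ : f₁ (i₃, j₃) = f (i₃, j₃) := by simp [hf₁, basicMove, hi₁₃.symm, hy₃.symm]
  set f₂ := f₁ + basicMove i₁ i₂ j₂ x with hf₂
  have s₂ : Step f₁ f₂ := step_add_basicMove s₁.2.1 hi₁₂ hx₂.symm (hf.val_ne hg t.neg₁.ne)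
    (by omega) (by omega) (by omega)
  -- the entry at `(i₁, x)` goes up by the first move and back down by the second
  have hD₁ : l1dist f₁ g + (f (i₁, x) - g (i₁, x)).natAbs
      ≤ l1dist f g + (f (i₁, x) + 1 - g (i₁, x)).natAbs + 1 := by
    have := l1dist_add_basicMove f g hy₁.symm hx₁
    rw [← hf₁] at this
    omega
  have hD₂ : l1dist f₂ g + (f (i₁, x) + 1 - g (i₁, x)).natAbs + 1
      ≤ l1dist f₁ g + (f (i₁, x) - g (i₁, x)).natAbs := by
    have := l1dist_add_basicMove f₁ g hi₁₂ hx₂.symm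
    rw [← hf₂, c₁, c₂, c₃, c₄] at this
    omega
  refine ⟨f₂, .tail (.single s₁) s₂, by omega, i₂, i₃, x, j₃, ?_, ?_, ?_, by omega⟩
  · simp only [hf₂, Pi.add_apply, c₂, basicMove, Prod.mk.injEq, hi₁₂.symm, hx₂, and_self,
      ↓reduceIte, zero_add, and_true, sub_zero, and_false, Order.lt_add_one_iff]
    exact hi₂x
  · simpa [hf₂, basicMove, c₅, hi₁₂.symm, hj₂₃.symm, hx₃.symm] using t.neg₂
  · simpa [hf₂, basicMove, c₆, hi₁₃.symm, hi₂₃.symm] using t.pos₃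

lemma IsTriangle.exists_reach_l1dist_lt (hI : 4 ≤ I) (t : IsTriangle f g i₁ i₂ i₃ j₁ j₂ j₃)
    (hf : Admissible f) (hg : Admissible g) (hgf : ¬HasDescentMove g f)
    (hpos : ∀ i, 0 < ∑ j, f (i, j)) : ∃ f', Reach f f' ∧ l1dist f' g < l1dist f g := by
  obtain ⟨y, -, hy⟩ := Finset.exists_mem_notMem_of_card_lt_card
    (s := {i₁, i₂, i₃}) (t := Finset.univ) (by simpa using Finset.card_le_three.trans_lt hI)
  simp only [Finset.mem_insert, Finset.mem_singleton, not_or] at hy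
  obtain ⟨hy₁, hy₂, hy₃⟩ := hy
  obtain ⟨x, -, hyx⟩ : ∃ x ∈ Finset.univ, 0 < f (y, x) :=
    Finset.exists_lt_of_sum_lt (by simpa using hpos y)
  obtain ⟨f', hr, hle, hd⟩ :
      ∃ f', Reach f f' ∧ l1dist f' g ≤ l1dist f g ∧ HasDescentMove f' g := by
    obtain rfl | hx₁ := eq_or_ne x j₁
    · exact t.rotate.rotate.exists_reach_hasDescentMove_of_pos_col hf hg hgf hy₃ hy₁ hy₂ hyx
    obtain rfl | hx₂ := eq_or_ne x j₂
    · exact t.exists_reach_hasDescentMove_of_pos_col hf hg hgf hy₁ hy₂ hy₃ hyx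
    obtain rfl | hx₃ := eq_or_ne x j₃
    · exact t.rotate.exists_reach_hasDescentMove_of_pos_col hf hg hgf hy₂ hy₃ hy₁ hyx
    exact t.exists_reach_hasDescentMove_of_pos_offCol hf hg hgf hy₁ hy₂ hy₃ hx₁ hx₂ hx₃ hyx
  obtain ⟨f'', hs, hlt⟩ := exists_step_l1dist_lt (hr.admissible hf) hg hd
  exact ⟨f'', hr.tail hs, hlt.trans_le hle⟩

lemma exists_reach_l1dist_lt (hI : 4 ≤ I) (hf : Admissible f) (hg : Admissible g)
    (hrow : ∀ i, ∑ j, f (i, j) = ∑ j, g (i, j)) (hcol : ∀ j, ∑ i, f (i, j) = ∑ i, g (i, j))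
    (hpos : ∀ i, 0 < ∑ j, f (i, j)) (hne : f ≠ g) :
    (∃ f', Reach f f' ∧ l1dist f' g < l1dist f g) ∨
      ∃ g', Reach g g' ∧ l1dist f g' < l1dist f g := by
  by_cases hfg : HasDescentMove f g
  · obtain ⟨f', hs, hlt⟩ := exists_step_l1dist_lt hf hg hfg
    exact .inl ⟨f', .single hs, hlt⟩
  by_cases hgf : HasDescentMove g f
  · obtain ⟨g', hs, hlt⟩ := exists_step_l1dist_lt hg hf hgf
    exact .inr ⟨g', .single hs, by rwa [l1dist_comm, l1dist_comm f]⟩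
  obtain ⟨i₁, i₂, i₃, j₁, j₂, j₃, t⟩ := exists_isTriangle hrow hcol hne hfg hgf
  exact .inl (t.exists_reach_l1dist_lt hI hf hg hgf hpos)

theorem reach_of_sum_eq (hI : 4 ≤ I) (hf : Admissible f) (hg : Admissible g)
    (hrow : ∀ i, ∑ j, f (i, j) = ∑ j, g (i, j)) (hcol : ∀ j, ∑ i, f (i, j) = ∑ i, g (i, j))
    (hpos : ∀ i, 0 < ∑ j, f (i, j)) : Reach f g := by
  induction hD : l1dist f g using Nat.strong_induction_on generalizing f g with
  | _ D ih =>
  obtain rfl | hne := eq_or_ne f g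
  · rfl
  rcases exists_reach_l1dist_lt hI hf hg hrow hcol hpos hne with ⟨f', hr, hlt⟩ | ⟨g', hr, hlt⟩
  · exact hr.trans (ih _ (hD ▸ hlt) (hr.admissible hf) hg
      (fun i => (hr.sum_row_eq i).symm.trans (hrow i))
      (fun j => (hr.sum_col_eq j).symm.trans (hcol j)) (fun i => hr.sum_row_eq i ▸ hpos i) rfl)
  · exact (ih _ (hD ▸ hlt) hf (hr.admissible hg) (fun i => (hrow i).trans (hr.sum_row_eq i))
      (fun j => (hcol j).trans (hr.sum_col_eq j)) hpos rfl).trans hr.symm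

end DiagonalZeros

theorem connected_diagonal_zeros_general {I J : ℕ} (hI : 4 ≤ I)
    (n n' : Fin I × Fin J → ℕ)
    (hd : ∀ p : Fin I × Fin J, (p.1 : ℕ) = (p.2 : ℕ) → n p = 0)
    (hd' : ∀ p : Fin I × Fin J, (p.1 : ℕ) = (p.2 : ℕ) → n' p = 0)
    (hrowpos : ∀ i : Fin I, 0 < ∑ j, n (i, j))
    (hrow : ∀ i : Fin I, ∑ j, n (i, j) = ∑ j, n' (i, j))
    (hcol : ∀ j : Fin J, ∑ i, n (i, j) = ∑ i, n' (i, j)) :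
    ∃ L : List (Fin I × Fin J → ℤ),
      (∀ m ∈ L, ∃ (i1 i2 : Fin I) (j1 j2 : Fin J), i1 ≠ i2 ∧ j1 ≠ j2 ∧
        (m = basicMove i1 i2 j1 j2 ∨ m = -basicMove i1 i2 j1 j2)) ∧
      ((fun p => (n p : ℤ)) + L.sum = fun p => (n' p : ℤ)) ∧
      (∀ k : ℕ, ∀ p : Fin I × Fin J,
        0 ≤ (n p : ℤ) + (L.take k).sum p ∧
        ((p.1 : ℕ) = (p.2 : ℕ) → (n p : ℤ) + (L.take k).sum p = 0)) := by
  open DiagonalZeros in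
  obtain ⟨L, hL, hsum, hadm⟩ := (reach_of_sum_eq hI (admissible_natCast hd)
    (admissible_natCast hd') (fun i => by exact_mod_cast hrow i) (fun j => by exact_mod_cast hcol j)
    fun i => by exact_mod_cast hrowpos i).exists_moves (admissible_natCast hd)
  exact ⟨L, hL, hsum, fun k p => ⟨(hadm k).1 p, (hadm k).2 p⟩⟩

/-- For `I, J ≥ 4`, any two tables with equal strictly positive row and column sums and
structural zeros on the diagonal are connected by signed basic moves through nonnegative
intermediate tables vanishing on the diagonal. -/
theorem connected_diagonal_zeros {I J : ℕ} (hI : 4 ≤ I) (hJ : 4 ≤ J)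
    (n n' : Fin I × Fin J → ℕ)
    (hd : ∀ p : Fin I × Fin J, (p.1 : ℕ) = (p.2 : ℕ) → n p = 0)
    (hd' : ∀ p : Fin I × Fin J, (p.1 : ℕ) = (p.2 : ℕ) → n' p = 0)
    (hrowpos : ∀ i : Fin I, 0 < ∑ j, n (i, j))
    (hcolpos : ∀ j : Fin J, 0 < ∑ i, n (i, j))
    (hrow : ∀ i : Fin I, ∑ j, n (i, j) = ∑ j, n' (i, j))
    (hcol : ∀ j : Fin J, ∑ i, n (i, j) = ∑ i, n' (i, j)) :
    ∃ L : List (Fin I × Fin J → ℤ),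
      (∀ m ∈ L, ∃ (i1 i2 : Fin I) (j1 j2 : Fin J), i1 ≠ i2 ∧ j1 ≠ j2 ∧
        (m = basicMove i1 i2 j1 j2 ∨ m = -basicMove i1 i2 j1 j2)) ∧
      ((fun p => (n p : ℤ)) + L.sum = fun p => (n' p : ℤ)) ∧
      (∀ k : ℕ, ∀ p : Fin I × Fin J,
        0 ≤ (n p : ℤ) + (L.take k).sum p ∧
        ((p.1 : ℕ) = (p.2 : ℕ) → (n p : ℤ) + (L.take k).sum p = 0)) :=
  connected_diagonal_zeros_general hI n n' hd hd' hrowpos hrow hcol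
end
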